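/- If n ≡ 2 (mod 5) and n ≥ 2, then removing the three edges x_{(n−1)1}x_{n1}, x_{(n−1)2}x_{n2}, and x_{n2}x_{n3} from G_{n,4} increases the total domination number; hence b_t(G_{n,4}) ≤ 3. -/

import Mathlib

/-!
For `n ≡ 2 (mod 5)` the columns of `G_{n,4}` filled periodically with the row sets
`{0,3}, {0,3}, ∅, {1,2}, ∅` form a total dominating set with `(6n + 8)/5` vertices.

For the lower bound, sweep a total dominating set `D` of the edge-deleted graph column by column,
keeping as state the rows of the last column together with those of its rows not yet dominated,
which the next column has to contain. A potential on the pairs (column index mod 5, state), found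
by computer, grows by at most `5 · (size of the new column) - 6` at each step, so the first `i`
columns contain at least `(6i + potential)/5` vertices. A finite check of the last two columns,
where the deleted edges are, then gives `5 |D| ≥ 6n + 13`.
-/

open SimpleGraph

/-- The grid graph `G_{n,m}`, the Cartesian (box) product of paths `P_n` and `P_m`. -/
def gridGraph (n m : ℕ) : SimpleGraph (Fin n × Fin m) :=
  (pathGraph n) □ (pathGraph m)

/-- `D` is a total dominating set of `G`: every vertex has a neighbor in `D`. -/
def IsTotalDomSet {V : Type*} (G : SimpleGraph V) (D : Set V) : Prop :=
  ∀ v : V, ∃ u ∈ D, G.Adj v u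

/-- The total domination number of `G`. -/
noncomputable def totalDomNum {V : Type*} [Fintype V] (G : SimpleGraph V) : ℕ :=
  sInf {k | ∃ D : Finset V, IsTotalDomSet G ↑D ∧ D.card = k}

/-- The total bondage number: the least number of edges whose removal increases
the total domination number. -/
noncomputable def totalBondage {V : Type*} [Fintype V] (G : SimpleGraph V) : ℕ :=
  sInf {k | ∃ F : Finset (Sym2 V), ↑F ⊆ G.edgeSet ∧ F.card = k ∧
    totalDomNum (G.deleteEdges ↑F) > totalDomNum G}

open Finset

section TotalDomination

variable {V : Type*} {G H : SimpleGraph V}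

theorem IsTotalDomSet.mono {D : Set V} (hD : IsTotalDomSet G D) (hGH : G ≤ H) :
    IsTotalDomSet H D :=
  fun v ↦ (hD v).imp fun _ ⟨hu, hvu⟩ ↦ ⟨hu, hGH hvu⟩

variable [Fintype V]

theorem totalDomNum_le {D : Finset V} (hD : IsTotalDomSet G D) : totalDomNum G ≤ #D :=
  Nat.sInf_le ⟨D, hD, rfl⟩

theorem le_totalDomNum {m : ℕ} (hne : ∃ D : Finset V, IsTotalDomSet G D)
    (h : ∀ D : Finset V, IsTotalDomSet G D → m ≤ #D) : m ≤ totalDomNum G := by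
  obtain ⟨D, hD⟩ := hne
  exact le_csInf ⟨_, D, hD, rfl⟩ fun _ ⟨D, hD, hk⟩ ↦ hk ▸ h D hD

theorem totalBondage_le [DecidableEq V] {F : Finset (Sym2 V)} (hF : ↑F ⊆ G.edgeSet)
    (h : totalDomNum G < totalDomNum (G.deleteEdges ↑F)) : totalBondage G ≤ #F :=
  Nat.sInf_le ⟨F, hF, rfl, h⟩

end TotalDomination

namespace GridFour

/-! A set of rows of a column is encoded as a bitmask `m < 16`, row `j` being `m.testBit j`. -/

def popcount (m : ℕ) : ℕ := #{j ∈ range 4 | m.testBit j}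

def verticalNbhd (m : ℕ) : ℕ := (m <<< 1 ||| m >>> 1) % 16

theorem verticalNbhd_lt (m : ℕ) : verticalNbhd m < 16 := Nat.mod_lt _ (by norm_num)

theorem lt_four_of_testBit {m k : ℕ} (hm : m < 16) (hk : m.testBit k) : k < 4 :=
  (Nat.pow_lt_pow_iff_right (by norm_num : 1 < 2)).1 ((Nat.ge_two_pow_of_testBit hk).trans_lt hm)

theorem testBit_verticalNbhd {m j : ℕ} (hm : m < 16) :
    (verticalNbhd m).testBit j ↔
      j < 4 ∧ ∃ k < 4, (j + 1 = k ∨ k + 1 = j) ∧ m.testBit k := by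
  simp only [verticalNbhd, show (16 : ℕ) = 2 ^ 4 from rfl, Nat.testBit_mod_two_pow,
    Nat.testBit_or, Nat.testBit_shiftLeft, Nat.testBit_shiftRight, Bool.and_eq_true,
    Bool.or_eq_true, decide_eq_true_eq]
  constructor
  · rintro ⟨hj, ⟨hj1, hk⟩ | hk⟩
    · exact ⟨hj, j - 1, by omega, Or.inr (by omega), hk⟩
    · exact ⟨hj, 1 + j, lt_four_of_testBit hm hk, Or.inl (by omega), hk⟩
  · rintro ⟨hj, k, -, rfl | rfl, hk⟩
    · exact ⟨hj, Or.inr (by rwa [Nat.add_comm])⟩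
    · exact ⟨hj, Or.inl ⟨by omega, by simpa using hk⟩⟩

theorem testBit_xor_fifteen {x j : ℕ} (hx : x < 16) (h : (x ^^^ 15).testBit j) :
    j < 4 ∧ x.testBit j = false := by
  rw [Nat.testBit_xor, show (15 : ℕ) = 2 ^ 4 - 1 from rfl, Nat.testBit_two_pow_sub_one] at h
  by_cases hj : j < 4
  · simpa [hj] using h
  · have hx' : x < 2 ^ j := hx.trans_le (Nat.pow_le_pow_right two_pos (not_lt.1 hj))
    simp [hj, Nat.testBit_lt_two_pow hx'] at h

/-- The sweep state `(c, u)` records the last column `c` and the set `u` of its rows dominated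
neither inside it nor by the column before; `u` must be contained in the next column. -/
def sweepStep (s : ℕ × ℕ) (c : ℕ) : ℕ × ℕ := (c, (verticalNbhd c ||| s.1) ^^^ 15)

def sweep (cols : ℕ → ℕ) : ℕ → ℕ × ℕ
  | 0 => (0, 0)
  | i + 1 => sweepStep (sweep cols i) (cols i)

theorem sweep_lt {cols : ℕ → ℕ} (hcols : ∀ i, cols i < 16) (i : ℕ) :
    (sweep cols i).1 < 16 ∧ (sweep cols i).2 < 16 := by
  induction i with
  | zero => simp [sweep]
  | succ i ih =>
    exact ⟨hcols i, Nat.xor_lt_two_pow (n := 4) (Nat.or_lt_two_pow (verticalNbhd_lt _) ih.1)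
      (by norm_num)⟩

/-- Entry `(r, a, b)` of the potential sits in bits `5 (256 r + 16 a + b)` to
`5 (256 r + 16 a + b) + 4` and stores the potential plus `6`; the value `31` marks a state
that cannot occur, whose potential is effectively infinite. -/
def potentialTable : ℕ := 3908159226643238733174585188832949285436588141892009650855234965929345997059325714289832676365678176415369896852015897295907292794622400333505952047800509379089256258006670560529130839001756945695116306342224303855623224296664670580139896914369228897555591957334776423629688430664815045262477461059981190012565992683041981377459295145190121340054536672607263288699002040688578075955101413587898344951682964529968243350434193736508909648892361999713510315791319448714682729673915612593547921076997929102383715363865494480583499036180175712255711120745805500524319775248908273881020591724564522662207228576470250650164046137644983599632629203193972651174088557629459342180974607488531445563536165628466838894360826507039470757825869510059266166724002173018918507670150210338093146660284500833067706710715901721701906148319404701178560679726290505001354461294720162817411322051901939571076928950264984610058536581581156251561228694495776395620457196277580228276316987468301599249424709940215519114218463268250080691654289871603385745670805589050683518839270400955299991988380714432840428938796846612973134267511037289915343302028495640244501922580643406709292263907370917923783643596122671264317506316881994428255304625974654891160421750955489557778599997394761727173547822724557402080220181571273884296033540442962169637737352856967421005079526373243053816902203583238906431676912034532335876699361197083100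962279671362339572737844824413867970023241722470761096430253132120987886615637064784840200528300659582518879260870837163062094759928283892360559594519864081871369617992592909370148783964414811911173330075569607990396267415091002115384607736497985863521718284370022331518669885657404136834507392168327479886387243609347541194236019820296100659915037294707149699356131075246821116236871071244526580379326374710982850339634895368972612287008315906920395003612968177358947278823227211367484000675803556455760284394857939807590

def potential (r : ℕ) (s : ℕ × ℕ) : ℤ :=
  let e := (potentialTable >>> (5 * (r * 256 + s.1 * 16 + s.2))) % 32
  if e = 31 then 1000 else e - 6

theorem potential_start : potential 0 (0, 0) ≤ 0 := by decide

set_option synthInstance.maxSize 20000 in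
theorem potential_sweepStep : ∀ r < 5, ∀ a < 16, ∀ b < 16, ∀ c < 16,
    (∀ j < 4, b.testBit j → c.testBit j) →
    potential ((r + 1) % 5) (sweepStep (a, b) c) ≤ potential r (a, b) + 5 * popcount c - 6 := by
  decide

/- `A`, `B` are the last two columns and `(a, b)` the sweep state before them; the hypotheses say
that columns `n - 1`, `n - 3` and `n - 2` are dominated once the three edges are removed
(`12` encodes the rows `{2, 3}`). -/
set_option synthInstance.maxSize 20000 in
theorem potential_finish : ∀ B < 16, B.testBit 0 → B.testBit 1 →
    ∀ A < 16, (A.testBit 2 || B.testBit 3) → (A.testBit 3 || B.testBit 2) →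
    ∀ a < 16, ∀ b < 16, (∀ j < 4, b.testBit j → A.testBit j) →
    (∀ j < 4, (a ||| verticalNbhd A ||| (B &&& 12)).testBit j) →
    25 ≤ potential 0 (a, b) + 5 * (popcount A + popcount B) := by
  decide

theorem potential_sweep_le {cols : ℕ → ℕ} (hcols : ∀ i, cols i < 16) {i : ℕ}
    (hadm : ∀ t < i, ∀ j < 4, (sweep cols t).2.testBit j → (cols t).testBit j) :
    6 * i + potential (i % 5) (sweep cols i) ≤ 5 * ∑ t ∈ range i, popcount (cols t) := by
  induction i with
  | zero => simpa [sweep] using potential_start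
  | succ i ih =>
    have hprev := ih fun t ht ↦ hadm t (by omega)
    have hstep := potential_sweepStep (i % 5) (Nat.mod_lt _ (by norm_num)) _ (sweep_lt hcols i).1
      _ (sweep_lt hcols i).2 _ (hcols i) (hadm i (Nat.lt_succ_self i))
    rw [Prod.mk.eta, show (i % 5 + 1) % 5 = (i + 1) % 5 by omega] at hstep
    rw [sum_range_succ, sweep.eq_2]
    push_cast at hprev ⊢
    linarith

variable {n : ℕ}

theorem gridGraph_adj {a b : Fin n} {j k : Fin 4} :
    (gridGraph n 4).Adj (a, j) (b, k) ↔
      (a : ℕ) = b ∧ ((j : ℕ) + 1 = k ∨ (k : ℕ) + 1 = j) ∨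
        (j : ℕ) = k ∧ ((a : ℕ) + 1 = b ∨ (b : ℕ) + 1 = a) := by
  simp only [gridGraph, boxProd_adj, pathGraph_adj, Fin.ext_iff]
  tauto

def colMask (D : Finset (Fin n × Fin 4)) (i : ℕ) : ℕ :=
  ∑ j ∈ {v ∈ D | (v.1 : ℕ) = i}.image (fun v ↦ (v.2 : ℕ)), 2 ^ j

section ColMask

variable {D : Finset (Fin n × Fin 4)}

theorem testBit_colMask {i j : ℕ} :
    (colMask D i).testBit j ↔ ∃ v ∈ D, (v.1 : ℕ) = i ∧ (v.2 : ℕ) = j := by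
  rw [colMask, ← Nat.mem_bitIndices, ← List.mem_toFinset,
    Finset.toFinset_bitIndices_sum_two_pow]
  simp [and_assoc]

theorem testBit_colMask_of_mem {v : Fin n × Fin 4} (hv : v ∈ D) : (colMask D v.1).testBit v.2 :=
  testBit_colMask.2 ⟨v, hv, rfl, rfl⟩

theorem colMask_lt (D : Finset (Fin n × Fin 4)) (i : ℕ) : colMask D i < 16 :=
  Nat.lt_pow_two_of_testBit (n := 4) _ fun k hk ↦ Bool.eq_false_iff.2 fun h ↦ by
    obtain ⟨v, -, -, rfl⟩ := testBit_colMask.1 h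
    have := v.2.isLt
    omega

theorem popcount_colMask (i : ℕ) : popcount (colMask D i) = #{v ∈ D | (v.1 : ℕ) = i} := by
  have hrows : {j ∈ range 4 | (colMask D i).testBit j} =
      {v ∈ D | (v.1 : ℕ) = i}.image (fun v ↦ (v.2 : ℕ)) := by
    ext j
    simp only [mem_filter, mem_range, testBit_colMask, mem_image]
    constructor
    · rintro ⟨-, v, hv, hi, hj⟩
      exact ⟨v, ⟨hv, hi⟩, hj⟩
    · rintro ⟨v, ⟨hv, hi⟩, hj⟩
      exact ⟨hj ▸ v.2.isLt, v, hv, hi, hj⟩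
  rw [popcount, hrows, card_image_of_injOn]
  rintro v hv w hw hvw
  simp only [coe_filter, Set.mem_ofPred_eq] at hv hw
  exact Prod.ext (Fin.ext (hv.2.trans hw.2.symm)) (Fin.ext hvw)

theorem card_eq_sum_popcount_colMask : #D = ∑ i ∈ range n, popcount (colMask D i) := by
  simp_rw [popcount_colMask]
  exact card_eq_sum_card_fiberwise fun v _ ↦ mem_range.2 v.1.isLt

theorem testBit_sweep_colMask_fst {a j : ℕ} :
    (sweep (colMask D) a).1.testBit j ↔ ∃ v ∈ D, (v.1 : ℕ) + 1 = a ∧ (v.2 : ℕ) = j := by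
  cases a with
  | zero => simp [sweep]
  | succ a => simp [sweep, sweepStep, testBit_colMask]

theorem exists_mem_adj_iff (a : Fin n) (j : Fin 4) :
    (∃ u ∈ D, (gridGraph n 4).Adj (a, j) u) ↔
      ((sweep (colMask D) a).1 ||| verticalNbhd (colMask D a) ||| colMask D (a + 1)).testBit j := by
  simp only [Nat.testBit_or, Bool.or_eq_true, testBit_sweep_colMask_fst,
    testBit_verticalNbhd (colMask_lt _ _), testBit_colMask]
  constructor
  · rintro ⟨⟨b, k⟩, hu, hadj⟩
    rcases gridGraph_adj.1 hadj with ⟨hab, hjk⟩ | ⟨hjk, hab | hab⟩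
    · exact Or.inl (Or.inr ⟨j.isLt, k, k.isLt, hjk, _, hu, hab.symm, rfl⟩)
    · exact Or.inr ⟨_, hu, hab.symm, hjk.symm⟩
    · exact Or.inl (Or.inl ⟨_, hu, hab, hjk.symm⟩)
  · rintro ((⟨⟨b, k⟩, hu, hb, hk⟩ | ⟨-, _, -, hjk, ⟨b, k⟩, hu, hb, hk⟩) |
        ⟨⟨b, k⟩, hu, hb, hk⟩) <;>
      exact ⟨_, hu, gridGraph_adj.2 (by dsimp only at hb hk; omega)⟩

theorem isTotalDomSet_gridGraph_iff :
    IsTotalDomSet (gridGraph n 4) ↑D ↔ ∀ (a : Fin n) (j : Fin 4),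
      ((sweep (colMask D) a).1 ||| verticalNbhd (colMask D a) ||| colMask D (a + 1)).testBit j :=
  ⟨fun hD a j ↦ (exists_mem_adj_iff a j).1 (hD (a, j)),
    fun h v ↦ (exists_mem_adj_iff v.1 v.2).2 (h v.1 v.2)⟩

theorem testBit_colMask_of_testBit_sweep (hD : IsTotalDomSet (gridGraph n 4) ↑D) {i j : ℕ}
    (hi : i < n) (hj : (sweep (colMask D) i).2.testBit j) : (colMask D i).testBit j := by
  cases i with
  | zero => simp [sweep] at hj
  | succ i =>
    obtain ⟨hj4, hfree⟩ := testBit_xor_fifteen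
      (Nat.or_lt_two_pow (n := 4) (verticalNbhd_lt _) (sweep_lt (colMask_lt D) i).1) hj
    rw [Nat.testBit_or, Bool.or_eq_false_iff] at hfree
    simpa [Nat.testBit_or, hfree.1, hfree.2] using
      isTotalDomSet_gridGraph_iff.1 hD ⟨i, by omega⟩ ⟨j, hj4⟩

end ColMask

def removedEdges (n : ℕ) (hn : 2 ≤ n) : Finset (Sym2 (Fin n × Fin 4)) :=
  {s((⟨n - 2, by omega⟩, 0), (⟨n - 1, by omega⟩, 0)),
   s((⟨n - 2, by omega⟩, 1), (⟨n - 1, by omega⟩, 1)),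
   s((⟨n - 1, by omega⟩, 1), (⟨n - 1, by omega⟩, 2))}

theorem mk_mem_removedEdges {hn : 2 ≤ n} {a b : Fin n} {j k : Fin 4} :
    s((a, j), (b, k)) ∈ removedEdges n hn ↔
      ((a : ℕ) = n - 2 ∧ (b : ℕ) = n - 1 ∨ (a : ℕ) = n - 1 ∧ (b : ℕ) = n - 2) ∧
          (j : ℕ) = k ∧ (j : ℕ) < 2 ∨
        (a : ℕ) = n - 1 ∧ (b : ℕ) = n - 1 ∧
          ((j : ℕ) = 1 ∧ (k : ℕ) = 2 ∨ (j : ℕ) = 2 ∧ (k : ℕ) = 1) := by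
  simp only [removedEdges, mem_insert, mem_singleton, Sym2.eq_iff, Prod.ext_iff, Fin.ext_iff,
    Fin.coe_ofNat_eq_mod]
  omega

theorem removedEdges_subset_edgeSet (hn : 2 ≤ n) :
    ↑(removedEdges n hn) ⊆ (gridGraph n 4).edgeSet := by
  simp only [removedEdges, coe_insert, coe_singleton, Set.insert_subset_iff,
    Set.singleton_subset_iff, mem_edgeSet, gridGraph_adj, Fin.coe_ofNat_eq_mod, true_and,
    true_or, and_true]
  omega

section RemovedEdges

variable {hn : 2 ≤ n} {D : Finset (Fin n × Fin 4)}

/-- Rows `0, 1` and `2, 3` stay joined inside every column. -/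
theorem isTotalDomSet_univ_deleteEdges :
    IsTotalDomSet ((gridGraph n 4).deleteEdges ↑(removedEdges n hn))
      ↑(univ : Finset (Fin n × Fin 4)) := by
  rintro ⟨a, j⟩
  refine ⟨(a, ⟨2 * (j / 2) + (1 - j % 2), by omega⟩), mem_coe.2 (mem_univ _), ?_⟩
  rw [deleteEdges_adj, gridGraph_adj, mem_coe, mk_mem_removedEdges]
  dsimp only
  omega

variable (hD : IsTotalDomSet ((gridGraph n 4).deleteEdges ↑(removedEdges n hn)) ↑D)
include hD

theorem testBit_penultimateColumn {j : ℕ} (hj : j < 4) :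
    ((sweep (colMask D) (n - 2)).1 ||| verticalNbhd (colMask D (n - 2)) |||
      (colMask D (n - 1) &&& 12)).testBit j := by
  obtain ⟨⟨b, k⟩, hu, hadj⟩ := hD (⟨n - 2, by omega⟩, ⟨j, hj⟩)
  rw [deleteEdges_adj, mem_coe, mk_mem_removedEdges] at hadj
  obtain ⟨hadj, hkept⟩ := hadj
  dsimp only at hkept
  simp only [Nat.testBit_or, Nat.testBit_and, Bool.or_eq_true, Bool.and_eq_true,
    testBit_sweep_colMask_fst, testBit_verticalNbhd (colMask_lt _ _), testBit_colMask]
  rcases gridGraph_adj.1 hadj with ⟨hab, hjk⟩ | ⟨hjk, hab | hab⟩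
  · exact Or.inl (Or.inr ⟨hj, k, k.isLt, hjk, _, hu, hab.symm, rfl⟩)
  · have hj2 : j = 2 ∨ j = 3 := by dsimp only at hab hjk; omega
    refine Or.inr ⟨⟨_, hu, by dsimp only at hab ⊢; omega, hjk.symm⟩, ?_⟩
    rcases hj2 with rfl | rfl <;> decide
  · exact Or.inl (Or.inl ⟨_, hu, hab, hjk.symm⟩)

theorem testBit_lastColumn :
    (colMask D (n - 1)).testBit 0 ∧ (colMask D (n - 1)).testBit 1 ∧
      ((colMask D (n - 2)).testBit 2 || (colMask D (n - 1)).testBit 3) ∧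
      ((colMask D (n - 2)).testBit 3 || (colMask D (n - 1)).testBit 2) := by
  have nbr (j : ℕ) (hj : j < 4) : ∃ b, ∃ k < 4, (colMask D b).testBit k ∧
      (b = n - 1 ∧ (j + 1 = k ∨ k + 1 = j) ∨ j = k ∧ b + 1 = n - 1) ∧
      ¬(j < 2 ∧ j = k ∧ b = n - 2 ∨
        b = n - 1 ∧ (j = 1 ∧ k = 2 ∨ j = 2 ∧ k = 1)) := by
    obtain ⟨⟨b, k⟩, hu, hadj⟩ := hD (⟨n - 1, by omega⟩, ⟨j, hj⟩)
    rw [deleteEdges_adj, gridGraph_adj, mem_coe, mk_mem_removedEdges] at hadj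
    dsimp only at hadj
    have := b.isLt
    have hbk : (colMask D b).testBit k := testBit_colMask_of_mem (v := (b, k)) hu
    refine ⟨b, k, k.isLt, hbk, ?_, ?_⟩ <;> omega
  refine ⟨?_, ?_, ?_, ?_⟩
  · obtain ⟨b, k, hk, hbk, hcoord⟩ := nbr 1 (by norm_num)
    obtain ⟨rfl, rfl⟩ : b = n - 1 ∧ k = 0 := by omega
    exact hbk
  · obtain ⟨b, k, hk, hbk, hcoord⟩ := nbr 0 (by norm_num)
    obtain ⟨rfl, rfl⟩ : b = n - 1 ∧ k = 1 := by omega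
    exact hbk
  · obtain ⟨b, k, hk, hbk, hcoord⟩ := nbr 2 (by norm_num)
    obtain ⟨rfl, rfl⟩ | ⟨rfl, rfl⟩ : b = n - 2 ∧ k = 2 ∨ b = n - 1 ∧ k = 3 := by omega
    all_goals simp [hbk]
  · obtain ⟨b, k, hk, hbk, hcoord⟩ := nbr 3 (by norm_num)
    obtain ⟨rfl, rfl⟩ | ⟨rfl, rfl⟩ : b = n - 2 ∧ k = 3 ∨ b = n - 1 ∧ k = 2 := by omega
    all_goals simp [hbk]

theorem six_mul_add_thirteen_le_five_mul_card (h : n % 5 = 2) : 6 * n + 13 ≤ 5 * #D := by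
  have hadm : ∀ t < n, ∀ j < 4, (sweep (colMask D) t).2.testBit j → (colMask D t).testBit j :=
    fun t ht _ _ ↦ testBit_colMask_of_testBit_sweep (hD.mono (deleteEdges_le _)) ht
  have hsweep := potential_sweep_le (colMask_lt D) (i := n - 2) fun t ht ↦ hadm t (by omega)
  obtain ⟨h₀, h₁, h₂, h₃⟩ := testBit_lastColumn hD
  have hfinish := potential_finish _ (colMask_lt D _) h₀ h₁ _ (colMask_lt D _) h₂ h₃ _
    (sweep_lt (colMask_lt D) _).1 _ (sweep_lt (colMask_lt D) _).2 (hadm _ (by omega))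
    fun j hj ↦ testBit_penultimateColumn hD hj
  rw [Prod.mk.eta] at hfinish
  rw [show (n - 2) % 5 = 0 by omega] at hsweep
  have hcard : #D = ∑ t ∈ range (n - 2), popcount (colMask D t) +
      popcount (colMask D (n - 2)) + popcount (colMask D (n - 1)) := by
    rw [card_eq_sum_popcount_colMask, show range n = range (n - 2 + 1 + 1) by congr 1; omega,
      sum_range_succ, sum_range_succ, show n - 2 + 1 = n - 1 by omega]
  have hn2 : ((n - 2 : ℕ) : ℤ) = n - 2 := by omega
  zify
  rw [hcard]
  push_cast at hsweep ⊢
  linarith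

end RemovedEdges

/-- Rows `{0, 3}, {0, 3}, ∅, {1, 2}, ∅`. -/
def pattern : ℕ → ℕ
  | 0 => 9
  | 1 => 9
  | 3 => 6
  | _ => 0

theorem pattern_lt (r : ℕ) : pattern r < 16 := by
  unfold pattern
  split <;> norm_num

theorem pattern_dominates : ∀ r < 5, ∀ j < 4,
    (pattern ((r + 4) % 5) ||| verticalNbhd (pattern r) ||| pattern ((r + 1) % 5)).testBit j := by
  decide

theorem sum_popcount_pattern (k : ℕ) :
    ∑ i ∈ range (5 * k + 2), popcount (pattern (i % 5)) = 6 * k + 4 := by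
  induction k with
  | zero => decide
  | succ k ih =>
    rw [show 5 * (k + 1) + 2 = 5 * k + 2 + 5 by ring, sum_range_add, ih]
    simp_rw [show ∀ i, (5 * k + 2 + i) % 5 = (i + 2) % 5 from fun i ↦ by omega]
    have : ∑ i ∈ range 5, popcount (pattern ((i + 2) % 5)) = 6 := by decide
    omega

def patternSet (n : ℕ) : Finset (Fin n × Fin 4) := {v | (pattern (v.1 % 5)).testBit v.2}

section PatternSet

variable (h : n % 5 = 2)
include h

theorem colMask_patternSet {i : ℕ} (hi : i ≤ n) :
    colMask (patternSet n) i = pattern (i % 5) := by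
  refine Nat.eq_of_testBit_eq fun j ↦ Bool.eq_iff_iff.2 ?_
  rw [testBit_colMask]
  constructor
  · rintro ⟨v, hv, rfl, rfl⟩
    simpa [patternSet] using hv
  · intro hj
    have hin : i < n := hi.lt_of_ne fun hin ↦ by simp [hin, h, pattern] at hj
    exact ⟨(⟨i, hin⟩, ⟨j, lt_four_of_testBit (pattern_lt _) hj⟩), by simpa [patternSet],
      rfl, rfl⟩

theorem isTotalDomSet_patternSet : IsTotalDomSet (gridGraph n 4) ↑(patternSet n) := by
  refine isTotalDomSet_gridGraph_iff.2 fun a j ↦ ?_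
  have hprev : (sweep (colMask (patternSet n)) a).1 = pattern ((a % 5 + 4) % 5) := by
    rcases a with ⟨_ | a, ha⟩
    · rfl
    · show colMask _ a = pattern (((a + 1) % 5 + 4) % 5)
      rw [show ((a + 1) % 5 + 4) % 5 = a % 5 by omega]
      exact colMask_patternSet h (by omega)
  rw [hprev, colMask_patternSet h a.isLt.le, colMask_patternSet h a.isLt,
    show ((a : ℕ) + 1) % 5 = ((a : ℕ) % 5 + 1) % 5 by omega]
  exact pattern_dominates _ (Nat.mod_lt _ (by norm_num)) _ j.isLt

theorem five_mul_card_patternSet : 5 * #(patternSet n) = 6 * n + 8 := by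
  obtain ⟨k, rfl⟩ : ∃ k, n = 5 * k + 2 := ⟨n / 5, by omega⟩
  rw [card_eq_sum_popcount_colMask,
    sum_congr rfl fun i hi ↦ by rw [colMask_patternSet h (mem_range.1 hi).le],
    sum_popcount_pattern]
  ring

end PatternSet

end GridFour

open GridFour in
theorem total_bondage_grid_four_two_mod_five (n : ℕ) (hn : 2 ≤ n) (h : n % 5 = 2) :
    totalDomNum ((gridGraph n 4).deleteEdges
        {s(((⟨n - 2, by omega⟩ : Fin n), (0 : Fin 4)), ((⟨n - 1, by omega⟩ : Fin n), (0 : Fin 4))),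
         s(((⟨n - 2, by omega⟩ : Fin n), (1 : Fin 4)), ((⟨n - 1, by omega⟩ : Fin n), (1 : Fin 4))),
         s(((⟨n - 1, by omega⟩ : Fin n), (1 : Fin 4)), ((⟨n - 1, by omega⟩ : Fin n), (2 : Fin 4)))})
      > totalDomNum (gridGraph n 4) ∧
    totalBondage (gridGraph n 4) ≤ 3 := by
  have hlt : totalDomNum (gridGraph n 4) <
      totalDomNum ((gridGraph n 4).deleteEdges ↑(removedEdges n hn)) := by
    have hupper := totalDomNum_le (isTotalDomSet_patternSet h)
    have hcard := five_mul_card_patternSet h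
    refine le_totalDomNum ⟨univ, isTotalDomSet_univ_deleteEdges⟩ fun D hD ↦ ?_
    have := six_mul_add_thirteen_le_five_mul_card hD h
    omega
  refine ⟨by simpa [removedEdges] using hlt, ?_⟩
  calc totalBondage (gridGraph n 4) ≤ #(removedEdges n hn) :=
        totalBondage_le (removedEdges_subset_edgeSet hn) hlt
    _ ≤ 3 := card_le_three
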